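/- arXiv:2205.07246 — 3 statements merged into one kernel-verified Lean document; each statement's English description precedes it below -/
import Mathlib

section
/- Let a > 0 and b > 0, and define f(z) = (1/2)·Φ(a·z − b) + (1/2)·Φ(−a·z − b), where Φ is the standard normal CDF. Then f is strictly monotone increasing on (0, ∞): for all 0 < z1 < z2, f(z1) < f(z2). -/
/-- The standard normal CDF: the measure of `(-∞, x]` under `N(0,1)`. -/
noncomputable def stdNormalCDF (x : ℝ) : ℝ :=
  ((ProbabilityTheory.gaussianReal 0 1) (Set.Iic x)).toReal

open ProbabilityTheory MeasureTheory Real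

lemma stdNormalCDF_eq (x : ℝ) :
    stdNormalCDF x = ∫ t in Set.Iic x, gaussianPDFReal 0 1 t := by
  rw [stdNormalCDF, gaussianReal_apply_eq_integral 0 one_ne_zero,
    ENNReal.toReal_ofReal]
  exact setIntegral_nonneg measurableSet_Iic fun t _ => gaussianPDFReal_nonneg 0 1 t

lemma stdNormalCDF_sub (x y : ℝ) :
    stdNormalCDF y - stdNormalCDF x = ∫ t in x..y, gaussianPDFReal 0 1 t := by
  rw [stdNormalCDF_eq, stdNormalCDF_eq]
  exact intervalIntegral.integral_Iic_sub_Iic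
    ((integrable_gaussianPDFReal 0 1).integrableOn)
    ((integrable_gaussianPDFReal 0 1).integrableOn)

lemma gaussianPDF_even (x : ℝ) : gaussianPDFReal 0 1 (-x) = gaussianPDFReal 0 1 x := by
  simp [ProbabilityTheory.gaussianPDFReal, neg_sq]

lemma gaussianPDF_cont : Continuous (gaussianPDFReal 0 1) := by
  rw [gaussianPDFReal_def]
  fun_prop

theorem stmt_11 (a b : ℝ) (ha : 0 < a) (hb : 0 < b)
    (f : ℝ → ℝ)
    (hf : ∀ z, f z = 1/2 * stdNormalCDF (a * z - b) + 1/2 * stdNormalCDF (-(a * z) - b)) :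
    ∀ z₁ z₂ : ℝ, 0 < z₁ → z₁ < z₂ → f z₁ < f z₂ := by
  intro z₁ z₂ hz₁ hlt
  rw [hf z₁, hf z₂]
  have key : stdNormalCDF (-(a * z₁) - b) - stdNormalCDF (-(a * z₂) - b)
      < stdNormalCDF (a * z₂ - b) - stdNormalCDF (a * z₁ - b) := by
    rw [stdNormalCDF_sub, stdNormalCDF_sub]
    have h1 : (∫ t in (-(a * z₂) - b)..(-(a * z₁) - b), gaussianPDFReal 0 1 t)
        = ∫ t in (a * z₁ - b)..(a * z₂ - b), gaussianPDFReal 0 1 (t + 2 * b) := by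
      rw [intervalIntegral.integral_comp_add_right]
      have := intervalIntegral.integral_comp_neg (a := a * z₁ - b + 2 * b)
        (b := a * z₂ - b + 2 * b) (f := gaussianPDFReal 0 1)
      simp only [gaussianPDF_even] at this
      rw [this]
      congr 1 <;> ring
    rw [h1]
    have hab : a * z₁ - b < a * z₂ - b := by
      have := mul_lt_mul_of_pos_left hlt ha
      linarith
    refine intervalIntegral.integral_lt_integral_of_continuousOn_of_le_of_exists_lt hab
      ((gaussianPDF_cont.comp (continuous_id.add continuous_const)).continuousOn) gaussianPDF_cont.continuousOn
      (fun t ht => ?_) ⟨a * z₁ - b, ?_, ?_⟩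
    · -- ≤ on the closed interval
      have ht1 : a * z₁ - b ≤ t := ht.1.le
      have htpos : -b < t := by nlinarith
      rw [ProbabilityTheory.gaussianPDFReal]
      rw [ProbabilityTheory.gaussianPDFReal]
      apply mul_le_mul_of_nonneg_left _ (by positivity)
      apply Real.exp_le_exp.mpr
      push_cast
      nlinarith [mul_nonneg hb.le (by linarith : (0:ℝ) ≤ t + b)]
    · exact Set.left_mem_Icc.mpr hab.le
    · -- strict at left endpoint
      rw [ProbabilityTheory.gaussianPDFReal]
      rw [ProbabilityTheory.gaussianPDFReal]
      apply mul_lt_mul_of_pos_left _ (by positivity)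
      apply Real.exp_lt_exp.mpr
      push_cast
      nlinarith [mul_pos hb (mul_pos ha hz₁)]
  linarith
end

section
/- (Utilization increases with model confidence.) Fix σ1, σ2 > 0, τ ∈ (1/2, 1), and z = μ2 − μ1 > 0. Define, for β > 0, c(β) = (1/β)·log(τ/(1−τ)) and the sampling rate R(β) = (1/2)·Φ((z/2 − c(β))/σ2) + (1/2)·Φ((−z/2 − c(β))/σ1) + (1/2)·Φ((z/2 − c(β))/σ1) + (1/2)·Φ((−z/2 − c(β))/σ2), where Φ is the standard normal CDF. Then R is strictly increasing on (0, ∞): for all 0 < β1 < β2, R(β1) < R(β2). Equivalently, for a fixed threshold τ, the masked probability P(Y_p = 0) strictly decreases as the confidence parameter β grows. -/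
lemma stdNormalCDF_strictMono : StrictMono stdNormalCDF := by
  intro a b hab
  unfold stdNormalCDF
  have hμ : MeasureTheory.IsProbabilityMeasure (ProbabilityTheory.gaussianReal 0 1) :=
    inferInstance
  have hsplit : Set.Iic b = Set.Iic a ∪ Set.Ioc a b := (Set.Iic_union_Ioc_eq_Iic hab.le).symm
  have hdisj : Disjoint (Set.Iic a) (Set.Ioc a b) := Set.Iic_disjoint_Ioc le_rfl
  have hadd : (ProbabilityTheory.gaussianReal 0 1) (Set.Iic b)
      = (ProbabilityTheory.gaussianReal 0 1) (Set.Iic a)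
        + (ProbabilityTheory.gaussianReal 0 1) (Set.Ioc a b) := by
    rw [hsplit, MeasureTheory.measure_union hdisj measurableSet_Ioc]
  have hpos : 0 < (ProbabilityTheory.gaussianReal 0 1) (Set.Ioc a b) := by
    rw [pos_iff_ne_zero]
    intro h0
    have hac := ProbabilityTheory.gaussianReal_absolutelyContinuous' (0 : ℝ) (v := 1) one_ne_zero
    have := hac h0
    rw [Real.volume_Ioc] at this
    simp only [ENNReal.ofReal_eq_zero, sub_nonpos] at this
    exact absurd this (not_le.mpr hab)
  have hfin : (ProbabilityTheory.gaussianReal 0 1) (Set.Iic b) ≠ ⊤ :=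
    (MeasureTheory.measure_lt_top _ _).ne
  have hfa : (ProbabilityTheory.gaussianReal 0 1) (Set.Iic a) ≠ ⊤ :=
    (MeasureTheory.measure_lt_top _ _).ne
  have hlt : (ProbabilityTheory.gaussianReal 0 1) (Set.Iic a)
      < (ProbabilityTheory.gaussianReal 0 1) (Set.Iic b) := by
    rw [hadd]
    exact ENNReal.lt_add_right hfa hpos.ne'
  exact (ENNReal.toReal_lt_toReal hfa hfin).mpr hlt

theorem stmt_14 (σ₁ σ₂ τ z : ℝ) (hσ₁ : 0 < σ₁) (hσ₂ : 0 < σ₂)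
    (hτ : τ ∈ Set.Ioo (1/2 : ℝ) 1) (hz : 0 < z)
    (c : ℝ → ℝ) (hc : ∀ β, c β = (1/β) * Real.log (τ / (1 - τ)))
    (R : ℝ → ℝ)
    (hR : ∀ β, R β = 1/2 * stdNormalCDF ((z/2 - c β) / σ₂)
        + 1/2 * stdNormalCDF ((-(z/2) - c β) / σ₁)
        + 1/2 * stdNormalCDF ((z/2 - c β) / σ₁)
        + 1/2 * stdNormalCDF ((-(z/2) - c β) / σ₂)) :
    StrictMonoOn R (Set.Ioi 0) := by
  intro β₁ hβ₁ β₂ hβ₂ hlt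
  simp only [Set.mem_Ioi] at hβ₁ hβ₂
  have hL : 0 < Real.log (τ / (1 - τ)) := by
    apply Real.log_pos
    rw [lt_div_iff₀ (by linarith [hτ.2])]
    linarith [hτ.1, hτ.2]
  have hcdec : c β₂ < c β₁ := by
    rw [hc, hc]
    apply mul_lt_mul_of_pos_right _ hL
    rw [one_div, one_div]
    exact inv_strictAnti₀ hβ₁ hlt
  have key : ∀ x : ℝ, ∀ σ : ℝ, 0 < σ →
      stdNormalCDF ((x - c β₁) / σ) < stdNormalCDF ((x - c β₂) / σ) := by
    intro x σ hσ
    exact stdNormalCDF_strictMono (by gcongr <;> linarith)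
  rw [hR, hR]
  have h1 := key (z/2) σ₂ hσ₂
  have h2 := key (-(z/2)) σ₁ hσ₁
  have h3 := key (z/2) σ₁ hσ₁
  have h4 := key (-(z/2)) σ₂ hσ₂
  linarith
end

section
/- (Implication (ii): pseudo label imbalance when class variances differ.) Let μ1 < μ2, 0 < σ1 < σ2, β > 0, and τ ∈ (1/2, 1), and set c = (1/β)·log(τ/(1−τ)). Assume (μ2 − μ1)/2 > c. Then P(Y_p = +1) < P(Y_p = −1); explicitly, (1/2)·Φ(((μ2−μ1)/2 − c)/σ2) + (1/2)·Φ(((μ1−μ2)/2 − c)/σ1) < (1/2)·Φ(((μ2−μ1)/2 − c)/σ1) + (1/2)·Φ(((μ1−μ2)/2 − c)/σ2), where Φ is the standard normal CDF. In particular, if σ1 ≠ σ2 the pseudo labels are imbalanced even though the true classes are balanced. -/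
theorem stmt_15 (μ₁ μ₂ σ₁ σ₂ β τ : ℝ) (hμ : μ₁ < μ₂) (hσ₁ : 0 < σ₁) (hσ₁₂ : σ₁ < σ₂)
    (hβ : 0 < β) (hτ : τ ∈ Set.Ioo (1/2 : ℝ) 1)
    (c : ℝ) (hc : c = (1/β) * Real.log (τ / (1 - τ)))
    (hsep : (μ₂ - μ₁) / 2 > c) :
    1/2 * stdNormalCDF (((μ₂ - μ₁) / 2 - c) / σ₂)
      + 1/2 * stdNormalCDF (((μ₁ - μ₂) / 2 - c) / σ₁)
    < 1/2 * stdNormalCDF (((μ₂ - μ₁) / 2 - c) / σ₁)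
      + 1/2 * stdNormalCDF (((μ₁ - μ₂) / 2 - c) / σ₂) := by
  obtain ⟨hτ1, hτ2⟩ := hτ
  have hσ₂ : 0 < σ₂ := hσ₁.trans hσ₁₂
  have hcpos : 0 < c := by
    rw [hc]
    apply mul_pos (by positivity)
    apply Real.log_pos
    rw [lt_div_iff₀ (by linarith)]
    linarith
  set a := (μ₂ - μ₁) / 2 - c with ha
  set b := (μ₁ - μ₂) / 2 - c with hb
  have hapos : 0 < a := by simp [ha]; linarith
  have hbneg : b < 0 := by simp [hb]; nlinarith
  have h1 : a / σ₂ < a / σ₁ := div_lt_div_of_pos_left hapos hσ₁ hσ₁₂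
  have h2 : b / σ₁ < b / σ₂ := by
    rw [div_lt_div_iff₀ hσ₁ hσ₂]
    nlinarith
  have := stdNormalCDF_strictMono h1
  have := stdNormalCDF_strictMono h2
  linarith
end
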